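/- arXiv:1612.07312 — 2 statements merged into one kernel-verified Lean document; each statement's English description precedes it below -/
import Mathlib

section
/- The identity operator on ℓ∞, viewed as an operator in L(C(βℕ), L(ℓ₁, 𝕂)) via C(βℕ) = ℓ∞ and L(ℓ₁,𝕂) = ℓ∞, is not weakly compact, yet its representing measure m : Σ → L(ℓ₁, 𝕂**) takes values in L(ℓ₁, 𝕂) = L(ℓ₁, 𝕂**). -/
open scoped ENNReal NNReal
open Set NormedSpace

set_option maxSynthPendingDepth 5

noncomputable section

instance : Fact ((1:ℝ≥0∞) ≤ ∞) := ⟨le_top⟩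

namespace Paper

/-- A finitely additive vector measure on the measurable sets. -/
def FinAdd {Ω Z : Type*} [MeasurableSpace Ω] [AddCommMonoid Z] (m : Set Ω → Z) : Prop :=
  m ∅ = 0 ∧ ∀ E F : Set Ω, MeasurableSet E → MeasurableSet F → Disjoint E F →
    m (E ∪ F) = m E + m F

/-- The semivariation `‖m‖(Ω)` of a vector measure: the supremum of
`‖∑ εᵢ • m Eᵢ‖` over finite measurable partitions of `Ω` and scalars `‖εᵢ‖ ≤ 1`. -/
def semivariation (𝕜 : Type*) {Ω Z : Type*} [RCLike 𝕜] [MeasurableSpace Ω]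
    [NormedAddCommGroup Z] [NormedSpace 𝕜 Z] (m : Set Ω → Z) : ℝ≥0∞ :=
  ⨆ (n : ℕ) (E : Fin n → Set Ω) (_ : ∀ i, MeasurableSet (E i))
    (_ : Pairwise (Function.onFun Disjoint E)) (_ : (⋃ i, E i) = Set.univ)
    (ε : Fin n → 𝕜) (_ : ∀ i, ‖ε i‖ ≤ 1),
    (‖∑ i, ε i • m (E i)‖₊ : ℝ≥0∞)

/-- The variation `|μ|(Ω)` of a vector measure. -/
def variation {Ω Z : Type*} [MeasurableSpace Ω] [NormedAddCommGroup Z] (m : Set Ω → Z) : ℝ≥0∞ :=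
  ⨆ (n : ℕ) (E : Fin n → Set Ω) (_ : ∀ i, MeasurableSet (E i))
    (_ : Pairwise (Function.onFun Disjoint E)) (_ : (⋃ i, E i) = Set.univ),
    ∑ i, (‖m (E i)‖₊ : ℝ≥0∞)

/-- The characteristic function of a set, as an element of the Banach space `ℓ∞(Ω, 𝕜)`
of bounded functions on `Ω`. -/
def indic (𝕜 : Type*) {Ω : Type*} [RCLike 𝕜] (E : Set Ω) : lp (fun _ : Ω => 𝕜) ∞ :=
  ⟨E.indicator (fun _ => 1), memℓp_infty ⟨1, by
    rintro r ⟨ω, rfl⟩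
    by_cases h : ω ∈ E <;> simp [h]⟩⟩

/-- The space `B(Σ)` of bounded measurable functions: the closure in `ℓ∞(Ω, 𝕜)` of the span of
characteristic functions of measurable sets (i.e. the uniform closure of simple functions). -/
def BSigma (Ω 𝕜 : Type*) [MeasurableSpace Ω] [RCLike 𝕜] : Submodule 𝕜 (lp (fun _ : Ω => 𝕜) ∞) :=
  (Submodule.span 𝕜 (indic 𝕜 '' {E : Set Ω | MeasurableSet E})).topologicalClosure

lemma indic_mem {Ω 𝕜 : Type*} [MeasurableSpace Ω] [RCLike 𝕜] {E : Set Ω}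
    (hE : MeasurableSet E) : indic 𝕜 E ∈ BSigma Ω 𝕜 :=
  Submodule.le_topologicalClosure _ (Submodule.subset_span ⟨E, hE, rfl⟩)

/-- A continuous function on a compact space, as an element of `ℓ∞(Ω, 𝕜)`. -/
def cToB {Ω 𝕜 : Type*} [TopologicalSpace Ω] [CompactSpace Ω] [RCLike 𝕜]
    (φ : C(Ω, 𝕜)) : lp (fun _ : Ω => 𝕜) ∞ :=
  ⟨fun ω => φ ω, memℓp_infty (isCompact_range ((map_continuous φ).norm)).bddAbove⟩

/-- `m` is a representing measure of `S ∈ L(C(Ω), Z')`, relative to the embedding `e : Z' → Z`: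
`m` is a finitely additive vector measure of bounded semivariation, and the elementary Bartle
integration operator `T` of `m` on `B(Σ)` (the unique continuous linear operator sending the
characteristic function of a measurable set `E` to `m E`) satisfies `∫ φ dm = e (S φ)` for every
continuous `φ`. -/
def Represents {Ω 𝕜 Z Z' : Type*} [TopologicalSpace Ω] [CompactSpace Ω] [MeasurableSpace Ω]
    [RCLike 𝕜] [NormedAddCommGroup Z] [NormedSpace 𝕜 Z] [NormedAddCommGroup Z']
    [NormedSpace 𝕜 Z'] (m : Set Ω → Z) (e : Z' →L[𝕜] Z) (S : C(Ω, 𝕜) →L[𝕜] Z') : Prop :=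
  FinAdd m ∧ semivariation 𝕜 m < ⊤ ∧
    ∃ T : (BSigma Ω 𝕜) →L[𝕜] Z,
      (∀ (E : Set Ω) (hE : MeasurableSet E), T ⟨indic 𝕜 E, indic_mem hE⟩ = m E) ∧
      ∀ φ : C(Ω, 𝕜), ∃ hφ : cToB φ ∈ BSigma Ω 𝕜, T ⟨cToB φ, hφ⟩ = e (S φ)

/-- The canonical embedding `J : L(X,Y) → L(X,Y**)`, `J A = j_Y ∘ A`. -/
def Jmap (𝕜 X Y : Type*) [RCLike 𝕜] [NormedAddCommGroup X] [NormedSpace 𝕜 X]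
    [NormedAddCommGroup Y] [NormedSpace 𝕜 Y] :
    (X →L[𝕜] Y) →L[𝕜] (X →L[𝕜] StrongDual 𝕜 (StrongDual 𝕜 Y)) :=
  ContinuousLinearMap.compL 𝕜 X Y (StrongDual 𝕜 (StrongDual 𝕜 Y)) (inclusionInDoubleDual 𝕜 Y)

/-- For `y* ∈ Y*`, the map `L(X,Y**) → X*` sending `A` to the functional `x ↦ ⟨y*, A x⟩`;
applied to a vector measure `m` it produces the measures `m_{y*} = (m(·))* y*`. -/
def lam {𝕜 X Y : Type*} [RCLike 𝕜] [NormedAddCommGroup X] [NormedSpace 𝕜 X]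
    [NormedAddCommGroup Y] [NormedSpace 𝕜 Y] (g : StrongDual 𝕜 Y) :
    (X →L[𝕜] StrongDual 𝕜 (StrongDual 𝕜 Y)) →L[𝕜] StrongDual 𝕜 X :=
  ContinuousLinearMap.compL 𝕜 X (StrongDual 𝕜 (StrongDual 𝕜 Y)) 𝕜 (ContinuousLinearMap.apply 𝕜 𝕜 g)


/-- A weakly compact operator: the image of the closed unit ball is contained in a
weakly compact subset of the target. -/
def WeaklyCompactOp {𝕜 E F : Type*} [RCLike 𝕜] [NormedAddCommGroup E] [NormedSpace 𝕜 E]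
    [NormedAddCommGroup F] [NormedSpace 𝕜 F] (T : E →L[𝕜] F) : Prop :=
  ∃ K : Set (WeakSpace 𝕜 F), IsCompact K ∧
    toWeakSpaceCLM 𝕜 F '' (T '' Metric.closedBall 0 1) ⊆ K


/-!
Let `x n ∈ C(Ω)` correspond to the indicator of `{0, …, n-1}` in `ℓ∞`, so that `S (x n)` is the
functional `v ↦ ∑_{k<n} v k` on `ℓ¹`. If `S` were weakly compact, `(S (x n))` would have a weak
cluster point `z`, and by Mazur's theorem `z` lies in every closed convex set that eventually
contains the sequence. Hence `z (δ k) = 1` for every unit vector `δ k` of `ℓ¹`, while `z` is a norm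
limit of functionals vanishing on almost all `δ k`; but each of these is at distance at least `1`
from `z`.

The second claim holds because `𝕂** = 𝕂`: every `φ ∈ 𝕂**` is evaluation at `φ id`.
-/

open Filter

section WeakCompactness

variable {𝕜 E F : Type*} [RCLike 𝕜] [NormedAddCommGroup E] [NormedSpace 𝕜 E]
  [NormedAddCommGroup F] [NormedSpace 𝕜 F] [NormedSpace ℝ F] [IsScalarTower ℝ 𝕜 F]

theorem WeaklyCompactOp.exists_mem_of_eventually_mem {T : E →L[𝕜] F} (hT : WeaklyCompactOp T)
    {ι : Type*} {l : Filter ι} [l.NeBot] {x : ι → E} (hx : ∀ i, ‖x i‖ ≤ 1) :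
    ∃ z : F, ∀ s : Set F, Convex ℝ s → IsClosed s → (∀ᶠ i in l, T (x i) ∈ s) → z ∈ s := by
  obtain ⟨K, hK, hTK⟩ := hT
  have hmem : ∀ i, toWeakSpace 𝕜 F (T (x i)) ∈ K := fun i =>
    hTK ⟨T (x i), ⟨x i, by simpa using hx i, rfl⟩, rfl⟩
  obtain ⟨z, -, hz⟩ := hK.exists_clusterPt (f := map (fun i => toWeakSpace 𝕜 F (T (x i))) l)
    (le_principal_iff.mpr (mem_map.mpr (univ_mem' hmem)))
  refine ⟨(toWeakSpace 𝕜 F).symm z, fun s hs hs_closed hev => ?_⟩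
  have hz_mem : z ∈ closure (toWeakSpace 𝕜 F '' s) :=
    hz.mem_closure_of_mem _ (mem_map.mpr (hev.mono fun i hi => mem_image_of_mem _ hi))
  rw [← hs.toWeakSpace_closure 𝕜, hs_closed.closure_eq] at hz_mem
  obtain ⟨y, hy, rfl⟩ := hz_mem
  simpa using hy

end WeakCompactness

section SequenceSpaces

variable {𝕜 : Type*} [RCLike 𝕜]

theorem norm_indic_le {Ω : Type*} (E : Set Ω) : ‖indic 𝕜 E‖ ≤ 1 :=
  lp.norm_le_of_forall_le zero_le_one fun ω => by
    by_cases h : ω ∈ E <;> simp [indic, h]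

def stdBasis (𝕜 : Type*) [RCLike 𝕜] (k : ℕ) : lp (fun _ : ℕ => 𝕜) 1 := lp.single 1 k 1

theorem norm_stdBasis (k : ℕ) : ‖stdBasis 𝕜 k‖ = 1 := by
  rw [stdBasis, lp.norm_single one_pos, norm_one]

theorem apply_stdBasis_of_eq_tsum
    {D : lp (fun _ : ℕ => 𝕜) ∞ →L[𝕜] (lp (fun _ : ℕ => 𝕜) 1 →L[𝕜] 𝕜)}
    (hD : ∀ f v, D f v = ∑' n, f n * v n) (f : lp (fun _ : ℕ => 𝕜) ∞) (k : ℕ) :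
    D f (stdBasis 𝕜 k) = f k := by
  rw [hD, tsum_eq_single k fun j hj => by simp [stdBasis, hj]]
  simp [stdBasis]

def eventuallyVanishing (𝕜 : Type*) [RCLike 𝕜] :
    Submodule 𝕜 (lp (fun _ : ℕ => 𝕜) 1 →L[𝕜] 𝕜) where
  carrier := {A | ∀ᶠ k in atTop, A (stdBasis 𝕜 k) = 0}
  zero_mem' := by simp
  add_mem' hA hB := (hA.and hB).mono fun k hk => by simp [hk.1, hk.2]
  smul_mem' c A hA := hA.mono fun k hk => by simp [hk]

theorem notMem_closure_eventuallyVanishing {z : lp (fun _ : ℕ => 𝕜) 1 →L[𝕜] 𝕜}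
    (hz : ∀ k, z (stdBasis 𝕜 k) = 1) : z ∉ closure (eventuallyVanishing 𝕜 : Set _) := by
  intro hmem
  obtain ⟨y, hy, hzy⟩ := Metric.mem_closure_iff.mp hmem 1 one_pos
  obtain ⟨k, hk⟩ := (show ∀ᶠ k in atTop, y (stdBasis 𝕜 k) = 0 from hy).exists
  have : (1 : ℝ) ≤ dist z y := calc
    (1 : ℝ) = ‖(z - y) (stdBasis 𝕜 k)‖ := by simp [hz, hk]
    _ ≤ ‖z - y‖ * ‖stdBasis 𝕜 k‖ := (z - y).le_opNorm _
    _ = dist z y := by rw [norm_stdBasis, mul_one, dist_eq_norm]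
  linarith

theorem not_weaklyCompactOp_of_apply_stdBasis {E : Type*} [NormedAddCommGroup E]
    [NormedSpace 𝕜 E] (S : E →L[𝕜] (lp (fun _ : ℕ => 𝕜) 1 →L[𝕜] 𝕜)) {x : ℕ → E}
    (hx : ∀ n, ‖x n‖ ≤ 1) (hSx : ∀ n k, S (x n) (stdBasis 𝕜 k) = if k < n then 1 else 0) :
    ¬ WeaklyCompactOp S := by
  intro hS
  obtain ⟨z, hz⟩ := hS.exists_mem_of_eventually_mem (l := atTop) hx
  have hz_one : ∀ k, z (stdBasis 𝕜 k) = 1 := fun k =>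
    hz {y | y (stdBasis 𝕜 k) = 1}
      ((convex_singleton 1).linear_preimage
        ((ContinuousLinearMap.apply 𝕜 𝕜 (stdBasis 𝕜 k)).toLinearMap.restrictScalars ℝ))
      (isClosed_eq (ContinuousLinearMap.apply 𝕜 𝕜 (stdBasis 𝕜 k)).continuous continuous_const)
      (eventually_gt_atTop k |>.mono fun n hn => by simp [hSx, hn])
  refine notMem_closure_eventuallyVanishing hz_one
    (hz _ ((eventuallyVanishing 𝕜).restrictScalars ℝ).convex.closure isClosed_closure
      (Eventually.of_forall fun n => subset_closure ?_))
  exact eventually_ge_atTop n |>.mono fun k hk => by simp [hSx, hk]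

end SequenceSpaces

theorem inclusionInDoubleDual_apply_id {𝕜 : Type*} [RCLike 𝕜]
    (φ : StrongDual 𝕜 (StrongDual 𝕜 𝕜)) :
    inclusionInDoubleDual 𝕜 𝕜 (φ (ContinuousLinearMap.id 𝕜 𝕜)) = φ := by
  ext g
  have hg : g = g 1 • ContinuousLinearMap.id 𝕜 𝕜 := by ext; simp
  conv_rhs => rw [hg]
  rw [map_smul, dual_def]
  simpa [mul_comm] using map_smul g (φ (ContinuousLinearMap.id 𝕜 𝕜)) 1

theorem Jmap_scalar_surjective (𝕜 X : Type*) [RCLike 𝕜] [NormedAddCommGroup X]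
    [NormedSpace 𝕜 X] : Function.Surjective (Jmap 𝕜 X 𝕜) := fun B =>
  ⟨(ContinuousLinearMap.apply 𝕜 𝕜 (ContinuousLinearMap.id 𝕜 𝕜)).comp B, by
    ext1 v; exact inclusionInDoubleDual_apply_id (B v)⟩

theorem statement8_general {Ω 𝕜 : Type*} [TopologicalSpace Ω] [CompactSpace Ω] [MeasurableSpace Ω] [RCLike 𝕜]
    (e : C(Ω, 𝕜) ≃ₗᵢ[𝕜] lp (fun _ : ℕ => 𝕜) ∞)
    (D : lp (fun _ : ℕ => 𝕜) ∞ →L[𝕜] (lp (fun _ : ℕ => 𝕜) 1 →L[𝕜] 𝕜))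
    (hD : ∀ (f : lp (fun _ : ℕ => 𝕜) ∞) (v : lp (fun _ : ℕ => 𝕜) 1),
      D f v = ∑' n, f n * v n) :
    ¬ WeaklyCompactOp (D.comp e.toContinuousLinearEquiv.toContinuousLinearMap) ∧
    ∀ m : Set Ω → (lp (fun _ : ℕ => 𝕜) 1 →L[𝕜] StrongDual 𝕜 (StrongDual 𝕜 𝕜)),
      Represents m (Jmap 𝕜 (lp (fun _ : ℕ => 𝕜) 1) 𝕜)
        (D.comp e.toContinuousLinearEquiv.toContinuousLinearMap) →
      ∀ E : Set Ω, MeasurableSet E → ∃ A : lp (fun _ : ℕ => 𝕜) 1 →L[𝕜] 𝕜,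
        m E = Jmap 𝕜 (lp (fun _ : ℕ => 𝕜) 1) 𝕜 A := by
  refine ⟨not_weaklyCompactOp_of_apply_stdBasis _
    (x := fun n => e.symm (indic 𝕜 (Iio n))) (fun n => ?_) (fun n k => ?_),
    fun m _ E _ => (Jmap_scalar_surjective 𝕜 _ (m E)).imp fun _ h => h.symm⟩
  · simpa using norm_indic_le (𝕜 := 𝕜) (Iio n)
  · simp [apply_stdBasis_of_eq_tsum hD, indic, Set.indicator_apply]

/-- The identity on `ℓ∞`, viewed via `C(βℕ) = ℓ∞` and `L(ℓ₁,𝕜) = ℓ∞` as an operator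
`S ∈ L(C(βℕ), L(ℓ₁,𝕜))`, is not weakly compact, yet every representing measure of `S`
takes its values in `L(ℓ₁,𝕜) = L(ℓ₁,𝕜**)`. -/
theorem statement8 {Ω 𝕜 : Type*} [TopologicalSpace Ω] [CompactSpace Ω] [T2Space Ω] [MeasurableSpace Ω] [BorelSpace Ω] [RCLike 𝕜]
    (e : C(Ω, 𝕜) ≃ₗᵢ[𝕜] lp (fun _ : ℕ => 𝕜) ∞)
    (D : lp (fun _ : ℕ => 𝕜) ∞ →L[𝕜] (lp (fun _ : ℕ => 𝕜) 1 →L[𝕜] 𝕜))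
    (hD : ∀ (f : lp (fun _ : ℕ => 𝕜) ∞) (v : lp (fun _ : ℕ => 𝕜) 1),
      D f v = ∑' n, f n * v n) :
    ¬ WeaklyCompactOp (D.comp e.toContinuousLinearEquiv.toContinuousLinearMap) ∧
    ∀ m : Set Ω → (lp (fun _ : ℕ => 𝕜) 1 →L[𝕜] StrongDual 𝕜 (StrongDual 𝕜 𝕜)),
      Represents m (Jmap 𝕜 (lp (fun _ : ℕ => 𝕜) 1) 𝕜)
        (D.comp e.toContinuousLinearEquiv.toContinuousLinearMap) →
      ∀ E : Set Ω, MeasurableSet E → ∃ A : lp (fun _ : ℕ => 𝕜) 1 →L[𝕜] 𝕜,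
        m E = Jmap 𝕜 (lp (fun _ : ℕ => 𝕜) 1) 𝕜 A :=
  statement8_general e D hD

end Paper
end
end

section
/- For 1 ≤ p ≤ ∞ the space C_p(Ω,X) = C(Ω) ⊗̂_{d_p} X is (isometrically) a closed subspace of B(Σ) ⊗̂_{d_p} X, because C(Ω) is an ideal in B(Σ) (being an L₁-predual) and tensoring an ideal with the Chevet–Saphar norm d_p preserves the subspace embedding. -/
/-!
`ι` is a contraction, so `d_p(ι ⊗ id u) ≤ d_p(u)`. Conversely `C(Ω)` is locally complemented in
`B(Σ)` by contractions: given finitely many continuous `zⱼ` and `η > 0`, take a finite partition of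
unity `ρᵢ` subordinate to a cover by open sets on which every `zⱼ` oscillates by less than `η`, with
chosen points `ωᵢ`; then `T f = ∑ᵢ f(ωᵢ) ρᵢ` is a contraction `B(Σ) → C(Ω)` with
`‖T ι zⱼ - zⱼ‖ ≤ η`. If `u = ∑ zⱼ ⊗ yⱼ` and `ι ⊗ id u = ∑ wᵢ ⊗ xᵢ`, applying `T ⊗ id` gives
`u = ∑ T wᵢ ⊗ xᵢ + ∑ (zⱼ - T ι zⱼ) ⊗ yⱼ`; after rescaling, the second sum costs arbitrarily little,
and `‖(T wᵢ)‖^w_{p'} ≤ ‖(wᵢ)‖^w_{p'}`.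
-/

open scoped ENNReal NNReal
open Set NormedSpace

set_option maxSynthPendingDepth 5

noncomputable section

namespace Paper

/-- The (strong) `ℓ_p` norm of a finite family of vectors. -/
def lpNorm (p : ℝ≥0∞) {E : Type*} [NormedAddCommGroup E] {n : ℕ} (x : Fin n → E) : ℝ≥0∞ :=
  if p = ∞ then ⨆ i, (‖x i‖₊ : ℝ≥0∞)
  else (∑ i, (‖x i‖₊ : ℝ≥0∞) ^ p.toReal) ^ (1 / p.toReal)

/-- The weak `ℓ_p` norm `‖(xᵢ)‖_p^w = sup_{‖f‖≤1} (∑ |f xᵢ|^p)^{1/p}` of a finite family. -/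
def weakNorm (𝕜 : Type*) (p : ℝ≥0∞) {E : Type*} [RCLike 𝕜] [NormedAddCommGroup E]
    [NormedSpace 𝕜 E] {n : ℕ} (x : Fin n → E) : ℝ≥0∞ :=
  ⨆ (f : StrongDual 𝕜 E) (_ : ‖f‖ ≤ 1), lpNorm p (fun i => f (x i))

open scoped TensorProduct in
/-- The right Chevet–Saphar norm `d_p` of a tensor `u ∈ Z ⊗ X`:
`d_p(u) = inf ‖(zᵢ)‖^w_{p'} · ‖(xᵢ)‖_p` over all finite representations `u = ∑ zᵢ ⊗ xᵢ`. -/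
def dpNorm (𝕜 : Type*) (p p' : ℝ≥0∞) {Z X : Type*} [RCLike 𝕜]
    [NormedAddCommGroup Z] [NormedSpace 𝕜 Z] [NormedAddCommGroup X] [NormedSpace 𝕜 X]
    (u : Z ⊗[𝕜] X) : ℝ≥0∞ :=
  ⨅ (n : ℕ) (z : Fin n → Z) (x : Fin n → X) (_ : u = ∑ i, z i ⊗ₜ[𝕜] x i),
    weakNorm 𝕜 p' z * lpNorm p x

end Paper

lemma ENNReal.sum_rpow_le_rpow_sum {ι : Type*} (s : Finset ι) (a : ι → ℝ≥0∞) {r : ℝ}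
    (hr : 1 ≤ r) :
    ∑ i ∈ s, a i ^ r ≤ (∑ i ∈ s, a i) ^ r := by
  classical
  induction s using Finset.induction with
  | empty => simp [ENNReal.zero_rpow_of_pos (zero_lt_one.trans_le hr)]
  | insert _ _ hi ih =>
    rw [Finset.sum_insert hi, Finset.sum_insert hi]
    exact (add_le_add_right ih _).trans (ENNReal.add_rpow_le_rpow_add _ _ hr)

lemma ENNReal.le_mul_of_forall_pos_le_add_mul_add {a W L : ℝ≥0∞} (hW : W ≠ ⊤) (hL : L ≠ ⊤)
    (h : ∀ δ : ℝ, 0 < δ → a ≤ (W + ENNReal.ofReal δ) * (L + ENNReal.ofReal δ)) :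
    a ≤ W * L := by
  lift W to ℝ≥0 using hW
  lift L to ℝ≥0 using hL
  have hlim : Filter.Tendsto (fun δ : ℝ => ENNReal.ofReal ((W + δ) * (L + δ)))
      (nhdsWithin 0 (Ioi 0)) (nhds (ENNReal.ofReal ((W + 0) * (L + 0)))) :=
    ((ENNReal.continuous_ofReal.comp (by fun_prop)).tendsto 0).mono_left nhdsWithin_le_nhds
  rw [add_zero, add_zero, ENNReal.ofReal_mul W.coe_nonneg, ENNReal.ofReal_coe_nnreal,
    ENNReal.ofReal_coe_nnreal] at hlim
  refine ge_of_tendsto hlim (eventually_nhdsWithin_of_forall fun δ (hδ : 0 < δ) => ?_)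
  rw [ENNReal.ofReal_mul (by positivity), ENNReal.ofReal_add W.coe_nonneg hδ.le,
    ENNReal.ofReal_add L.coe_nonneg hδ.le, ENNReal.ofReal_coe_nnreal, ENNReal.ofReal_coe_nnreal]
  exact h δ hδ

lemma exists_partitionOfUnity_dist_lt {Ω Y : Type*} [TopologicalSpace Ω] [CompactSpace Ω]
    [T2Space Ω] [PseudoMetricSpace Y] {s : Set C(Ω, Y)} (hs : s.Finite) {η : ℝ} (hη : 0 < η) :
    ∃ (c : Finset Ω) (ρ : PartitionOfUnity c Ω univ),
      ∀ i ω, ρ i ω ≠ 0 → ∀ f ∈ s, dist (f i) (f ω) < η := by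
  set U : Ω → Set Ω := fun ω₀ => {ω | ∀ f ∈ s, dist (f ω₀) (f ω) < η}
  have hU : ∀ ω₀, IsOpen (U ω₀) := fun ω₀ => by
    simp only [U, ofPred_forall]
    exact hs.isOpen_biInter fun f _ => isOpen_lt (by fun_prop) continuous_const
  obtain ⟨c, hc⟩ := isCompact_univ.elim_finite_subcover U hU
    fun ω _ => mem_iUnion.2 ⟨ω, fun f _ => by simpa using hη⟩
  obtain ⟨ρ, hρ⟩ := PartitionOfUnity.exists_isSubordinate isClosed_univ (fun i : c => U i)
    (fun i => hU i) (by simpa only [iUnion_subtype] using hc)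
  exact ⟨c, ρ, fun i ω h => hρ i (subset_tsupport _ h)⟩

namespace PartitionOfUnity

variable {Ω ι : Type*} [TopologicalSpace Ω] [Fintype ι] (ρ : PartitionOfUnity ι Ω univ)

lemma sum_apply_eq_one (ω : Ω) : ∑ i, ρ i ω = 1 := by
  rw [← finsum_eq_sum_of_fintype, ρ.sum_eq_one (Set.mem_univ ω)]

lemma norm_sum_smul_le {E : Type*} [SeminormedAddCommGroup E] [NormedSpace ℝ E]
    (a : ι → E) (ω : Ω) {C : ℝ} (h : ∀ i, ρ i ω ≠ 0 → ‖a i‖ ≤ C) :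
    ‖∑ i, ρ i ω • a i‖ ≤ C := calc
  ‖∑ i, ρ i ω • a i‖ ≤ ∑ i, ρ i ω * C := by
    refine (norm_sum_le _ _).trans (Finset.sum_le_sum fun i _ => ?_)
    rw [norm_smul, Real.norm_of_nonneg (ρ.nonneg i ω)]
    rcases eq_or_ne (ρ i ω) 0 with h0 | h0
    · simp [h0]
    · exact mul_le_mul_of_nonneg_left (h i h0) (ρ.nonneg i ω)
  _ = C := by rw [← Finset.sum_mul, ρ.sum_apply_eq_one, one_mul]

end PartitionOfUnity

namespace Paper

section LpNorm

variable {E : Type*} [NormedAddCommGroup E] {p : ℝ≥0∞}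

lemma sum_nnnorm_eq_ofReal_sum {n : ℕ} (v : Fin n → E) :
    ∑ i, (‖v i‖₊ : ℝ≥0∞) = ENNReal.ofReal (∑ i, ‖v i‖) := by
  rw [ENNReal.ofReal_sum_of_nonneg fun i _ => norm_nonneg (v i)]
  simp only [ofReal_norm, enorm_eq_nnnorm]

lemma lpNorm_le_sum_nnnorm (hp : 1 ≤ p) {n : ℕ} (v : Fin n → E) :
    lpNorm p v ≤ ∑ i, (‖v i‖₊ : ℝ≥0∞) := by
  unfold lpNorm
  split_ifs with hp_top
  · exact iSup_le fun i => Finset.single_le_sum (f := fun i => (‖v i‖₊ : ℝ≥0∞))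
      (fun i _ => zero_le) (Finset.mem_univ i)
  · have hr : 1 ≤ p.toReal := by simpa using ENNReal.toReal_mono hp_top hp
    calc (∑ i, (‖v i‖₊ : ℝ≥0∞) ^ p.toReal) ^ (1 / p.toReal)
        ≤ ((∑ i, (‖v i‖₊ : ℝ≥0∞)) ^ p.toReal) ^ (1 / p.toReal) := by
          gcongr
          exact ENNReal.sum_rpow_le_rpow_sum _ _ hr
      _ = ∑ i, (‖v i‖₊ : ℝ≥0∞) := by
          rw [← ENNReal.rpow_mul, mul_one_div_cancel (by positivity), ENNReal.rpow_one]

lemma lpNorm_append_le (hp : 1 ≤ p) {n k : ℕ} (a : Fin n → E) (b : Fin k → E) :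
    lpNorm p (Fin.append a b) ≤ lpNorm p a + lpNorm p b := by
  unfold lpNorm
  split_ifs with hp_top
  · refine iSup_le fun i => Fin.addCases (fun j => ?_) (fun j => ?_) i
    · rw [Fin.append_left]
      exact (le_iSup (fun j => (‖a j‖₊ : ℝ≥0∞)) j).trans le_self_add
    · rw [Fin.append_right]
      exact (le_iSup (fun j => (‖b j‖₊ : ℝ≥0∞)) j).trans le_add_self
  · have hr : 1 ≤ p.toReal := by simpa using ENNReal.toReal_mono hp_top hp
    rw [Fin.sum_univ_add]
    simp only [Fin.append_left, Fin.append_right]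
    exact ENNReal.rpow_add_le_add_rpow _ _ (by positivity)
      ((div_le_one (zero_lt_one.trans_le hr)).2 hr)

lemma lpNorm_ne_top (hp : 1 ≤ p) {n : ℕ} (v : Fin n → E) : lpNorm p v ≠ ⊤ :=
  ne_top_of_le_ne_top (sum_nnnorm_eq_ofReal_sum v ▸ ENNReal.ofReal_ne_top)
    (lpNorm_le_sum_nnnorm hp v)

end LpNorm

section WeakNorm

variable {𝕜 : Type*} [RCLike 𝕜] {E F : Type*} [NormedAddCommGroup E] [NormedSpace 𝕜 E]
  [NormedAddCommGroup F] [NormedSpace 𝕜 F] {p : ℝ≥0∞} {n : ℕ}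

lemma lpNorm_le_weakNorm (v : Fin n → E) {f : StrongDual 𝕜 E} (hf : ‖f‖ ≤ 1) :
    lpNorm p (fun i => f (v i)) ≤ weakNorm 𝕜 p v :=
  le_iSup₂ (f := fun (f : StrongDual 𝕜 E) (_ : ‖f‖ ≤ 1) => lpNorm p fun i => f (v i)) f hf

lemma weakNorm_append_le (hp : 1 ≤ p) {k : ℕ} (a : Fin n → E) (b : Fin k → E) :
    weakNorm 𝕜 p (Fin.append a b) ≤ weakNorm 𝕜 p a + weakNorm 𝕜 p b := by
  refine iSup₂_le fun f hf => ?_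
  have happend : (fun i => f (Fin.append a b i)) =
      Fin.append (fun i => f (a i)) (fun i => f (b i)) := by
    funext i
    refine Fin.addCases (fun j => ?_) (fun j => ?_) i <;> simp
  rw [happend]
  exact (lpNorm_append_le hp _ _).trans
    (add_le_add (lpNorm_le_weakNorm a hf) (lpNorm_le_weakNorm b hf))

lemma weakNorm_le_sum_nnnorm (hp : 1 ≤ p) (v : Fin n → E) :
    weakNorm 𝕜 p v ≤ ∑ i, (‖v i‖₊ : ℝ≥0∞) := by
  refine iSup₂_le fun f hf => (lpNorm_le_sum_nnnorm hp _).trans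
    (Finset.sum_le_sum fun i _ => ?_)
  have : ‖f (v i)‖₊ ≤ ‖v i‖₊ :=
    (f.le_opNNNorm (v i)).trans (mul_le_of_le_one_left zero_le hf)
  exact_mod_cast this

lemma weakNorm_comp_le (S : E →ₗ[𝕜] F) (hS : ∀ e, ‖S e‖ ≤ ‖e‖) (v : Fin n → E) :
    weakNorm 𝕜 p (fun i => S (v i)) ≤ weakNorm 𝕜 p v := by
  refine iSup₂_le fun f hf => ?_
  set S' : E →L[𝕜] F := S.mkContinuous 1 fun e => by simpa using hS e
  have hS' : ‖S'‖ ≤ 1 := LinearMap.mkContinuous_norm_le _ zero_le_one _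
  exact lpNorm_le_weakNorm v (f := f.comp S')
    ((f.opNorm_comp_le S').trans (mul_le_one₀ hf (norm_nonneg _) hS'))

lemma weakNorm_ne_top (hp : 1 ≤ p) (v : Fin n → E) : weakNorm 𝕜 p v ≠ ⊤ :=
  ne_top_of_le_ne_top (sum_nnnorm_eq_ofReal_sum v ▸ ENNReal.ofReal_ne_top)
    (weakNorm_le_sum_nnnorm hp v)

end WeakNorm

section DpNorm

open scoped TensorProduct

variable {𝕜 : Type*} [RCLike 𝕜] {E F X : Type*} [NormedAddCommGroup E] [NormedSpace 𝕜 E]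
  [NormedAddCommGroup F] [NormedSpace 𝕜 F] [NormedAddCommGroup X] [NormedSpace 𝕜 X]
  {p p' : ℝ≥0∞}

lemma dpNorm_le_of_eq_sum {u : E ⊗[𝕜] X} {n : ℕ} {z : Fin n → E} {x : Fin n → X}
    (h : u = ∑ i, z i ⊗ₜ[𝕜] x i) :
    dpNorm 𝕜 p p' u ≤ weakNorm 𝕜 p' z * lpNorm p x :=
  iInf_le_of_le n <| iInf_le_of_le z <| iInf_le_of_le x <| iInf_le_of_le h le_rfl

lemma dpNorm_le_of_eq_sum_add_sum (hp : 1 ≤ p) (hp' : 1 ≤ p') {u : E ⊗[𝕜] X} {n k : ℕ}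
    {z : Fin n → E} {x : Fin n → X} {e : Fin k → E} {y : Fin k → X}
    (h : u = ∑ i, z i ⊗ₜ[𝕜] x i + ∑ j, e j ⊗ₜ[𝕜] y j) :
    dpNorm 𝕜 p p' u ≤ (weakNorm 𝕜 p' z + ENNReal.ofReal (∑ j, ‖e j‖)) *
      (lpNorm p x + ENNReal.ofReal (∑ j, ‖y j‖)) := by
  have happend : u = ∑ i, Fin.append z e i ⊗ₜ[𝕜] Fin.append x y i := by
    simp [h, Fin.sum_univ_add]
  rw [← sum_nnnorm_eq_ofReal_sum, ← sum_nnnorm_eq_ofReal_sum]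
  exact (dpNorm_le_of_eq_sum happend).trans <| mul_le_mul'
    ((weakNorm_append_le hp' z e).trans (add_le_add_right (weakNorm_le_sum_nnnorm hp' e) _))
    ((lpNorm_append_le hp x y).trans (add_le_add_right (lpNorm_le_sum_nnnorm hp y) _))

lemma dpNorm_map_le (S : E →ₗ[𝕜] F) (hS : ∀ e, ‖S e‖ ≤ ‖e‖) (u : E ⊗[𝕜] X) :
    dpNorm 𝕜 p p' (TensorProduct.map S LinearMap.id u) ≤ dpNorm 𝕜 p p' u := by
  refine le_iInf fun n => le_iInf fun z => le_iInf fun x => le_iInf fun hrep => ?_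
  have hrep' : TensorProduct.map S LinearMap.id u = ∑ i, S (z i) ⊗ₜ[𝕜] x i := by
    simp [hrep]
  exact (dpNorm_le_of_eq_sum hrep').trans (mul_le_mul_left (weakNorm_comp_le S hS z) _)

end DpNorm

section AlmostRetractions

open scoped TensorProduct

variable {𝕜 : Type*} [RCLike 𝕜] {E F X : Type*} [NormedAddCommGroup E] [NormedSpace 𝕜 E]
  [NormedAddCommGroup F] [NormedSpace 𝕜 F] [NormedAddCommGroup X] [NormedSpace 𝕜 X]
  {p p' : ℝ≥0∞}

/-- A local form of "`ι(E)` is an ideal in `F`". -/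
def HasAlmostRetractions (ι : E →ₗ[𝕜] F) : Prop :=
  ∀ s : Set E, s.Finite → ∀ η : ℝ, 0 < η →
    ∃ T : F →L[𝕜] E, ‖T‖ ≤ 1 ∧ ∀ e ∈ s, ‖T (ι e) - e‖ ≤ η

lemma dpNorm_le_dpNorm_map (hp : 1 ≤ p) (hp' : 1 ≤ p') {ι : E →ₗ[𝕜] F}
    (hι : HasAlmostRetractions ι) (u : E ⊗[𝕜] X) :
    dpNorm 𝕜 p p' u ≤ dpNorm 𝕜 p p' (TensorProduct.map ι LinearMap.id u) := by
  refine le_iInf fun n => le_iInf fun w => le_iInf fun x => le_iInf fun hrep => ?_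
  obtain ⟨k, z, y, rfl⟩ := TensorProduct.exists_sum_tmul_eq u
  refine ENNReal.le_mul_of_forall_pos_le_add_mul_add (weakNorm_ne_top hp' w)
    (lpNorm_ne_top hp x) fun δ hδ => ?_
  set S := ∑ j, ‖y j‖
  set t : ℝ := δ / (S + 1)
  have ht : 0 < t := by positivity
  obtain ⟨T, hT, hTz⟩ := hι (range z) (finite_range z) (t * δ / (k + 1)) (by positivity)
  have hTrep : ∑ j, T (ι (z j)) ⊗ₜ[𝕜] y j = ∑ i, T (w i) ⊗ₜ[𝕜] x i := by
    simpa using congrArg (LinearMap.rTensor X (T : F →ₗ[𝕜] E)) hrep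
  -- The error `z j - T (ι (z j))` is small but `y j` is not: rebalance the two by `t`.
  have hsplit : ∑ j, z j ⊗ₜ[𝕜] y j = ∑ i, T (w i) ⊗ₜ[𝕜] x i +
      ∑ j, ((t : 𝕜)⁻¹ • (z j - T (ι (z j)))) ⊗ₜ[𝕜] ((t : 𝕜) • y j) := by
    rw [← hTrep, ← Finset.sum_add_distrib]
    refine Finset.sum_congr rfl fun j _ => ?_
    rw [TensorProduct.smul_tmul_smul, inv_mul_cancel₀ (by exact_mod_cast ht.ne'), one_smul,
      TensorProduct.sub_tmul, add_sub_cancel]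
  have herr : ∑ j, ‖(t : 𝕜)⁻¹ • (z j - T (ι (z j)))‖ ≤ δ := calc
    ∑ j, ‖(t : 𝕜)⁻¹ • (z j - T (ι (z j)))‖ ≤ ∑ _j : Fin k, δ / (k + 1) := by
      refine Finset.sum_le_sum fun j _ => ?_
      rw [norm_smul, norm_inv, RCLike.norm_ofReal, abs_of_pos ht, norm_sub_rev,
        inv_mul_le_iff₀ ht, ← mul_div_assoc]
      exact hTz (z j) (mem_range_self j)
    _ ≤ δ := by
      rw [Finset.sum_const, Finset.card_univ, Fintype.card_fin, nsmul_eq_mul,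
        mul_div_assoc']
      exact div_le_of_le_mul₀ (by positivity) hδ.le (by linarith)
  have hy : ∑ j, ‖(t : 𝕜) • y j‖ ≤ δ := calc
    ∑ j, ‖(t : 𝕜) • y j‖ = t * S := by
      simp only [norm_smul, RCLike.norm_ofReal, abs_of_pos ht, S, Finset.mul_sum]
    _ ≤ δ := by
      rw [div_mul_eq_mul_div, div_le_iff₀ (by positivity)]
      exact mul_le_mul_of_nonneg_left (le_add_of_nonneg_right zero_le_one) hδ.le
  refine (dpNorm_le_of_eq_sum_add_sum hp hp' hsplit).trans <| mul_le_mul'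
    (add_le_add (weakNorm_comp_le (T : F →ₗ[𝕜] E) (fun e => ?_) w)
      (ENNReal.ofReal_le_ofReal herr))
    (add_le_add_right (ENNReal.ofReal_le_ofReal hy) _)
  simpa using T.le_of_opNorm_le hT e

end AlmostRetractions

section Averaging

variable {Ω ι : Type*} [TopologicalSpace Ω] [Fintype ι]

def averagingOp (𝕜 : Type*) [RCLike 𝕜] (ρ : PartitionOfUnity ι Ω univ) (x : ι → Ω) :
    lp (fun _ : Ω => 𝕜) ∞ →L[𝕜] C(Ω, 𝕜) :=
  ∑ i, (lp.evalCLM 𝕜 (fun _ : Ω => 𝕜) ∞ (x i)).smulRight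
    (⟨fun ω => (ρ i ω : 𝕜), by fun_prop⟩ : C(Ω, 𝕜))

variable {𝕜 : Type*} [RCLike 𝕜] (ρ : PartitionOfUnity ι Ω univ) (x : ι → Ω)

lemma averagingOp_apply (f : lp (fun _ : Ω => 𝕜) ∞) (ω : Ω) :
    averagingOp 𝕜 ρ x f ω = ∑ i, ρ i ω • f (x i) := by
  simp [averagingOp, lp.evalCLM, RCLike.real_smul_eq_coe_mul, mul_comm]

variable [CompactSpace Ω]

lemma norm_averagingOp_le : ‖averagingOp 𝕜 ρ x‖ ≤ 1 :=
  ContinuousLinearMap.opNorm_le_bound _ zero_le_one fun f =>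
    (ContinuousMap.norm_le _ (by positivity)).2 fun ω => by
      rw [averagingOp_apply, one_mul]
      exact ρ.norm_sum_smul_le _ ω fun i _ => lp.norm_apply_le_norm ENNReal.top_ne_zero f (x i)

lemma norm_averagingOp_sub_le {f : lp (fun _ : Ω => 𝕜) ∞} {φ : C(Ω, 𝕜)}
    (hf : ∀ i, f (x i) = φ (x i)) {η : ℝ} (hη : 0 ≤ η)
    (hφ : ∀ i ω, ρ i ω ≠ 0 → ‖φ (x i) - φ ω‖ ≤ η) :
    ‖averagingOp 𝕜 ρ x f - φ‖ ≤ η := by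
  refine (ContinuousMap.norm_le _ hη).2 fun ω => ?_
  have hdiff : averagingOp 𝕜 ρ x f ω - φ ω = ∑ i, ρ i ω • (φ (x i) - φ ω) := by
    simp only [averagingOp_apply, hf, smul_sub, Finset.sum_sub_distrib, ← Finset.sum_smul,
      ρ.sum_apply_eq_one, one_smul]
  rw [ContinuousMap.sub_apply, hdiff]
  exact ρ.norm_sum_smul_le _ ω (hφ · ω)

lemma hasAlmostRetractions_of_apply_eq [T2Space Ω] [MeasurableSpace Ω]
    {ι : C(Ω, 𝕜) →ₗ[𝕜] BSigma Ω 𝕜}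
    (hι : ∀ (φ : C(Ω, 𝕜)) (ω : Ω), (↑(ι φ) : lp (fun _ : Ω => 𝕜) ∞) ω = φ ω) :
    HasAlmostRetractions ι := by
  intro s hs η hη
  obtain ⟨c, ρ, hρ⟩ := exists_partitionOfUnity_dist_lt hs hη
  refine ⟨averagingOp 𝕜 ρ (↑) ∘L (BSigma Ω 𝕜).subtypeL, ?_, fun φ hφ => ?_⟩
  · exact (ContinuousLinearMap.opNorm_comp_le _ _).trans
      (mul_le_one₀ (norm_averagingOp_le ρ _) (norm_nonneg _) (Submodule.norm_subtypeL_le _))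
  · exact norm_averagingOp_sub_le ρ _ (fun i => hι φ i) hη.le
      fun i ω h => by rw [← dist_eq_norm]; exact (hρ i ω h φ hφ).le

end Averaging

open scoped TensorProduct in
theorem statement15_general {Ω 𝕜 X : Type*} [TopologicalSpace Ω] [CompactSpace Ω] [T2Space Ω] [MeasurableSpace Ω] [RCLike 𝕜]
    [NormedAddCommGroup X] [NormedSpace 𝕜 X]
    (p p' : ℝ≥0∞) (hp : 1 ≤ p) (hpp' : p⁻¹ + p'⁻¹ = 1)
    (ι : C(Ω, 𝕜) →ₗ[𝕜] BSigma Ω 𝕜)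
    (hι : ∀ (φ : C(Ω, 𝕜)) (ω : Ω), (↑(ι φ) : lp (fun _ : Ω => 𝕜) ∞) ω = φ ω)
    (u : C(Ω, 𝕜) ⊗[𝕜] X) :
    dpNorm 𝕜 p p' (TensorProduct.map ι (LinearMap.id (R := 𝕜) (M := X)) u) =
      dpNorm 𝕜 p p' u := by
  have hp' : 1 ≤ p' := ENNReal.inv_le_one.1 (hpp' ▸ le_add_self)
  have hι_le : ∀ φ, ‖ι φ‖ ≤ ‖φ‖ := fun φ => by
    rw [Submodule.coe_norm]
    exact lp.norm_le_of_forall_le (norm_nonneg φ) fun ω => by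
      rw [hι]
      exact φ.norm_coe_le_norm ω
  have hι_ret : HasAlmostRetractions ι := hasAlmostRetractions_of_apply_eq hι
  have hle := dpNorm_map_le (p := p) (p' := p') (X := X) ι hι_le u
  have hge := dpNorm_le_dpNorm_map (X := X) hp hp' hι_ret u
  exact hle.antisymm hge

open scoped TensorProduct in
/-- `C_p(Ω,X) = C(Ω) ⊗̂_{d_p} X` is isometrically a subspace of `B(Σ) ⊗̂_{d_p} X`: the canonical
inclusion `ι : C(Ω) → B(Σ)` induces a `d_p`-isometry of `C(Ω) ⊗ X` into `B(Σ) ⊗ X`. -/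
theorem statement15 {Ω 𝕜 X : Type*} [TopologicalSpace Ω] [CompactSpace Ω] [T2Space Ω] [MeasurableSpace Ω] [BorelSpace Ω] [RCLike 𝕜]
    [NormedAddCommGroup X] [NormedSpace 𝕜 X]
    (p p' : ℝ≥0∞) (hp : 1 ≤ p) (hpp' : p⁻¹ + p'⁻¹ = 1)
    (ι : C(Ω, 𝕜) →ₗ[𝕜] BSigma Ω 𝕜)
    (hι : ∀ (φ : C(Ω, 𝕜)) (ω : Ω), (↑(ι φ) : lp (fun _ : Ω => 𝕜) ∞) ω = φ ω)
    (u : C(Ω, 𝕜) ⊗[𝕜] X) :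
    dpNorm 𝕜 p p' (TensorProduct.map ι (LinearMap.id (R := 𝕜) (M := X)) u) =
      dpNorm 𝕜 p p' u :=
  statement15_general p p' hp hpp' ι hι u

end Paper
end
end
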